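/- Let T ≥ 2 and let G_T : ℝ^T → ℝ be as in the lower-bound construction. Then for every x ∈ ℝ^T, the smallest eigenvalue of the Hessian of G_T at x satisfies λ_min(∇²G_T(x)) ≤ 700. -/

import Mathlib

open scoped RealInnerProductSpace

/-- The bump-like component function `Ψ` of the hard-instance construction. -/
noncomputable def Psi (x : ℝ) : ℝ :=
  if 1 / 2 < x then Real.exp (1 - 1 / (2 * x - 1) ^ 2) else 0

/-- The component function `Λ` of the hard-instance construction. -/
noncomputable def Lam (x : ℝ) : ℝ := 8 * (Real.exp (-x ^ 2 / 2) - 1)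

/-- The hard instance `G_T(x) = Ψ(1)Λ(x₁) + ∑_{i=2}^T [Ψ(-x_{i-1})Λ(-x_i) + Ψ(x_{i-1})Λ(x_i)]`
(coordinates are `0`-indexed in Lean: mathematical `x_i` is Lean's `x ⟨i-1, _⟩`). -/
noncomputable def G (T : ℕ) (x : EuclideanSpace ℝ (Fin T)) : ℝ :=
  ∑ i : Fin T,
    if (i : ℕ) = 0 then Psi 1 * Lam (x i)
    else
      Psi (-(x ⟨(i : ℕ) - 1, Nat.lt_of_le_of_lt (Nat.sub_le _ _) i.isLt⟩)) * Lam (-(x i)) +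
        Psi (x ⟨(i : ℕ) - 1, Nat.lt_of_le_of_lt (Nat.sub_le _ _) i.isLt⟩) * Lam (x i)

/-- The smallest eigenvalue of a (self-adjoint) operator on `ℝ^T`, as the infimum of the
Rayleigh quotient over the unit sphere. -/
noncomputable def lambdaMin {T : ℕ}
    (A : EuclideanSpace ℝ (Fin T) →L[ℝ] EuclideanSpace ℝ (Fin T)) : ℝ :=
  ⨅ u : {v : EuclideanSpace ℝ (Fin T) // ‖v‖ = 1}, ⟪u.1, A u.1⟫

/-!
Test the Rayleigh quotient at the last basis vector `e_T`. Only the last summand of `G_T` involves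
`x_T`, and since `Λ` is even it equals `(Ψ(-x_{T-1}) + Ψ(x_{T-1})) Λ(x_T)`; hence
`⟪e_T, ∇²G_T(x) e_T⟫ = (Ψ(-x_{T-1}) + Ψ(x_{T-1})) Λ''(x_T) ≤ 2e · 16 < 700`, because
`0 ≤ Ψ ≤ e` and `Λ''(s) = 8(s² - 1)e^{-s²/2} ≤ 16`. Where `∇G_T` is not differentiable,
the Hessian is Lean's junk value `0`.
-/

open Asymptotics Filter Topology

section Hessian

variable {F : Type*} [NormedAddCommGroup F] [InnerProductSpace ℝ F] [CompleteSpace F]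

theorem inner_fderiv_gradient_eq_deriv_deriv {f : F → ℝ} (hf : Differentiable ℝ f) {x : F}
    (hx : DifferentiableAt ℝ (gradient f) x) (v : F) :
    ⟪v, fderiv ℝ (gradient f) x v⟫ = deriv (deriv fun t : ℝ => f (x + t • v)) 0 := by
  have hline : ∀ t : ℝ, HasDerivAt (fun s : ℝ => x + s • v) v t := fun t => by
    simpa using ((hasDerivAt_id t).smul_const v).const_add x
  have hderiv :
      deriv (fun t : ℝ => f (x + t • v)) = fun t => ⟪gradient f (x + t • v), v⟫ := by
    funext t
    rw [inner_gradient_left]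
    exact ((hf _).hasFDerivAt.comp_hasDerivAt t (hline t)).deriv
  rw [hderiv, real_inner_comm]
  refine (HasDerivAt.deriv ?_).symm
  simpa using ((hx.hasFDerivAt.comp_hasDerivAt_of_eq 0 (hline 0) (by simp)).inner ℝ
    (hasDerivAt_const 0 v))

end Hessian

theorem lambdaMin_le_inner {T : ℕ} (A : EuclideanSpace ℝ (Fin T) →L[ℝ] EuclideanSpace ℝ (Fin T))
    {u : EuclideanSpace ℝ (Fin T)} (hu : ‖u‖ = 1) : lambdaMin A ≤ ⟪u, A u⟫ := by
  refine ciInf_le ⟨-‖A‖, ?_⟩ (⟨u, hu⟩ : {v : EuclideanSpace ℝ (Fin T) // ‖v‖ = 1})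
  rintro _ ⟨⟨v, hv⟩, rfl⟩
  have := (abs_real_inner_le_norm v (A v)).trans
    (mul_le_mul_of_nonneg_left (A.le_opNorm v) (norm_nonneg v))
  rw [hv] at this
  linarith [neg_abs_le ⟪v, A v⟫]

theorem Psi_nonneg (t : ℝ) : 0 ≤ Psi t := by
  unfold Psi
  split_ifs
  exacts [(Real.exp_pos _).le, le_rfl]

theorem Psi_le_exp_one (t : ℝ) : Psi t ≤ Real.exp 1 := by
  unfold Psi
  split_ifs
  · exact Real.exp_le_exp.mpr (by have := one_div_nonneg.mpr (sq_nonneg (2 * t - 1)); linarith)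
  · exact (Real.exp_pos _).le

-- `exp (-1/s²) ≤ s²` because `1 + 1/s² ≤ exp (1/s²)`.
theorem Psi_le_mul_sq (t : ℝ) : Psi t ≤ Real.exp 1 * (2 * t - 1) ^ 2 := by
  unfold Psi
  split_ifs with ht
  · have hs : 0 < (2 * t - 1) ^ 2 := pow_pos (by linarith) 2
    rw [sub_eq_add_neg, Real.exp_add, Real.exp_neg]
    gcongr
    rw [inv_le_comm₀ (Real.exp_pos _) hs, ← one_div]
    linarith [Real.add_one_le_exp (1 / (2 * t - 1) ^ 2)]
  · positivity

theorem hasDerivAt_Psi_half : HasDerivAt Psi 0 (1 / 2) := by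
  have hPsi : Psi =O[𝓝 (1 / 2)] fun t => ‖t - 1 / 2‖ ^ 2 := by
    refine IsBigO.of_bound (4 * Real.exp 1) (Eventually.of_forall fun t => ?_)
    rw [Real.norm_of_nonneg (Psi_nonneg t), norm_pow, norm_norm]
    calc Psi t ≤ Real.exp 1 * (2 * t - 1) ^ 2 := Psi_le_mul_sq t
      _ = 4 * Real.exp 1 * ‖t - 1 / 2‖ ^ 2 := by rw [Real.norm_eq_abs, sq_abs]; ring
  have hPsi_half : Psi (1 / 2) = 0 := by simp [Psi]
  refine HasDerivAt.of_isLittleO ?_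
  simp only [hPsi_half, smul_zero, sub_zero]
  exact hPsi.trans_isLittleO (isLittleO_pow_sub_sub _ one_lt_two)

@[fun_prop]
theorem differentiable_Psi : Differentiable ℝ Psi := by
  intro t
  rcases lt_trichotomy t (1 / 2) with ht | rfl | ht
  · refine (differentiableAt_const (0 : ℝ)).congr_of_eventuallyEq ?_
    filter_upwards [Iio_mem_nhds ht] with s (hs : s < 1 / 2)
    rw [Psi, if_neg hs.not_gt]
  · exact hasDerivAt_Psi_half.differentiableAt
  · have hs : (2 * t - 1) ^ 2 ≠ 0 := (pow_pos (by linarith) 2).ne'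
    have : DifferentiableAt ℝ (fun s : ℝ => Real.exp (1 - 1 / (2 * s - 1) ^ 2)) t := by
      fun_prop (disch := exact hs)
    refine this.congr_of_eventuallyEq ?_
    filter_upwards [Ioi_mem_nhds ht] with s (hs : 1 / 2 < s)
    rw [Psi, if_pos hs]

theorem Lam_neg (s : ℝ) : Lam (-s) = Lam s := by
  simp [Lam]

theorem hasDerivAt_neg_sq_div_two (s : ℝ) : HasDerivAt (fun s : ℝ => -s ^ 2 / 2) (-s) s :=
  ((hasDerivAt_pow 2 s).neg.div_const 2).congr_deriv (by norm_num; ring)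

theorem hasDerivAt_Lam (s : ℝ) : HasDerivAt Lam (-8 * s * Real.exp (-s ^ 2 / 2)) s :=
  (((hasDerivAt_neg_sq_div_two s).exp.sub_const 1).const_mul 8).congr_deriv (by ring)

theorem deriv_deriv_Lam (s : ℝ) :
    deriv (deriv Lam) s = 8 * (s ^ 2 - 1) * Real.exp (-s ^ 2 / 2) := by
  rw [funext fun s => (hasDerivAt_Lam s).deriv]
  exact ((((hasDerivAt_id' s).const_mul (-8)).mul
    (hasDerivAt_neg_sq_div_two s).exp).congr_deriv (by ring)).deriv

theorem deriv_deriv_Lam_le (s : ℝ) : deriv (deriv Lam) s ≤ 16 := by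
  rw [deriv_deriv_Lam, neg_div, Real.exp_neg, ← div_eq_mul_inv, div_le_iff₀ (Real.exp_pos _)]
  linarith [Real.add_one_le_exp (s ^ 2 / 2)]

@[fun_prop]
theorem differentiable_Lam : Differentiable ℝ Lam := fun s => (hasDerivAt_Lam s).differentiableAt

theorem differentiable_G (T : ℕ) : Differentiable ℝ (G T) := by
  unfold G
  refine Differentiable.fun_sum fun i _ => ?_
  split_ifs <;> fun_prop

theorem G_add_smul_single_last_sub (n : ℕ) (y : EuclideanSpace ℝ (Fin (n + 2))) (t : ℝ) :
    G (n + 2) (y + t • EuclideanSpace.single (Fin.last (n + 1)) 1) - G (n + 2) y =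
      (Psi (-y (Fin.last n).castSucc) + Psi (y (Fin.last n).castSucc)) *
        (Lam (y (Fin.last (n + 1)) + t) - Lam (y (Fin.last (n + 1)))) := by
  set z := y + t • EuclideanSpace.single (Fin.last (n + 1)) (1 : ℝ)
  have hcoord (k : Fin (n + 2)) (hk : (k : ℕ) < n + 1) : z k = y k := by
    simp [z, Fin.ext_iff, hk.ne]
  have hlast : z (Fin.last (n + 1)) = y (Fin.last (n + 1)) + t := by simp [z]
  have hprev : (⟨(Fin.last (n + 1) : ℕ) - 1, by simp⟩ : Fin (n + 2)) = (Fin.last n).castSucc :=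
    Fin.ext (by simp)
  unfold G
  simp only [Fin.sum_univ_castSucc (n := n + 1)]
  rw [add_sub_add_comm, ← Finset.sum_sub_distrib, Finset.sum_eq_zero fun i _ => ?_, zero_add]
  · simp only [hprev]
    simp only [Fin.val_last, Nat.add_one_ne_zero, if_false, hlast,
      hcoord _ (Fin.castSucc_lt_last _), Lam_neg]
    ring
  · rw [hcoord _ (Fin.castSucc_lt_last i), hcoord _ (by simp only [Fin.val_castSucc]; omega),
      sub_self]

theorem deriv_deriv_G_along_last (n : ℕ) (x : EuclideanSpace ℝ (Fin (n + 2))) :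
    deriv (deriv fun t : ℝ =>
        G (n + 2) (x + t • EuclideanSpace.single (Fin.last (n + 1)) 1)) 0 =
      (Psi (-x (Fin.last n).castSucc) + Psi (x (Fin.last n).castSucc)) *
        deriv (deriv Lam) (x (Fin.last (n + 1))) := by
  have hline := fun t => eq_add_of_sub_eq' (G_add_smul_single_last_sub n x t)
  simp only [hline, deriv_const_add', deriv_const_mul_field', deriv_sub_const, deriv_comp_const_add,
    add_zero]

/-- For every `x`, the smallest eigenvalue of the Hessian of `G_T` at `x`
is at most `700`. -/
theorem stmt_14 (T : ℕ) (hT : 2 ≤ T) (x : EuclideanSpace ℝ (Fin T)) :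
    lambdaMin (fderiv ℝ (gradient (G T)) x) ≤ 700 := by
  obtain ⟨n, rfl⟩ : ∃ n, T = n + 2 := ⟨T - 2, by omega⟩
  have he : ‖EuclideanSpace.single (Fin.last (n + 1)) (1 : ℝ)‖ = 1 := by simp
  refine (lambdaMin_le_inner _ he).trans ?_
  by_cases hx : DifferentiableAt ℝ (gradient (G (n + 2))) x
  · rw [inner_fderiv_gradient_eq_deriv_deriv (differentiable_G _) hx, deriv_deriv_G_along_last]
    set a := x (Fin.last n).castSucc
    have hPsi : 0 ≤ Psi (-a) + Psi a := add_nonneg (Psi_nonneg _) (Psi_nonneg _)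
    calc _ ≤ (Psi (-a) + Psi a) * 16 := mul_le_mul_of_nonneg_left (deriv_deriv_Lam_le _) hPsi
      _ ≤ 700 := by linarith [Psi_le_exp_one a, Psi_le_exp_one (-a), Real.exp_one_lt_d9]
  · simp [fderiv_zero_of_not_differentiableAt hx]
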